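/- arXiv:0910.5645 — 4 statements merged into one kernel-verified Lean document; each statement's English description precedes it below -/
import Mathlib

section
/- Let κ_b > 0, let κ_G satisfy −κ_b < κ_G < 0, let H₀ ∈ ℝ, and set l² := H₀²·κ_b·(κ_b − κ_G)/(2(κ_b + κ_G)). Then for all real numbers k₁, k₂ (principal curvatures), with H := k₁ + k₂, K := k₁k₂ and |B|² := k₁² + k₂², one has (κ_b/2)(H − H₀)² + κ_G·K ≥ −(κ_G/2)|B|² + ((κ_b + κ_G)/4)·H² − l², and in particular (κ_b/2)(H − H₀)² + κ_G·K ≥ −l². -/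
/-- Lower bound for the Helfrich surface energy density. Let `κb > 0`,
`−κb < κG < 0`, `H₀ ∈ ℝ` and `l² = H₀²·κb·(κb − κG)/(2(κb + κG))`. Then for all
principal curvatures `k₁, k₂`, with `H = k₁ + k₂`, `K = k₁k₂`, `|B|² = k₁² + k₂²`,
one has
`(κb/2)(H − H₀)² + κG·K ≥ −(κG/2)|B|² + ((κb + κG)/4)·H² − l²`
and in particular `(κb/2)(H − H₀)² + κG·K ≥ −l²`. -/
theorem stmt_3 (κb κG H₀ : ℝ) (hκb : 0 < κb) (h₁ : -κb < κG) (h₂ : κG < 0)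
    (l2 : ℝ) (hl2 : l2 = H₀ ^ 2 * κb * (κb - κG) / (2 * (κb + κG))) :
    ∀ k₁ k₂ : ℝ,
      (κb / 2 * ((k₁ + k₂) - H₀) ^ 2 + κG * (k₁ * k₂)
          ≥ -(κG / 2) * (k₁ ^ 2 + k₂ ^ 2) + (κb + κG) / 4 * (k₁ + k₂) ^ 2 - l2)
      ∧ (κb / 2 * ((k₁ + k₂) - H₀) ^ 2 + κG * (k₁ * k₂) ≥ -l2) := by
  intro k₁ k₂
  have hs : 0 < κb + κG := by linarith
  have hkey : l2 * (2 * (κb + κG)) = H₀ ^ 2 * κb * (κb - κG) := by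
    rw [hl2]; field_simp
  have h1 : κb / 2 * ((k₁ + k₂) - H₀) ^ 2 + κG * (k₁ * k₂)
      ≥ -(κG / 2) * (k₁ ^ 2 + k₂ ^ 2) + (κb + κG) / 4 * (k₁ + k₂) ^ 2 - l2 := by
    nlinarith [sq_nonneg ((κb + κG) * (k₁ + k₂) - 2 * κb * H₀), hs, sq_nonneg (k₁ - k₂)]
  refine ⟨h1, ?_⟩
  nlinarith [sq_nonneg (k₁ + k₂), sq_nonneg k₁, sq_nonneg k₂, h1]
end

section
/- Let κ_b > 0, κ_G ∈ ℝ and H₀ ∈ ℝ. Then the following are equivalent: (i) there exist positive numbers c and λ such that for all k₁, k₂ ∈ ℝ one has (κ_b/2)(k₁ + k₂ − H₀)² + κ_G·k₁k₂ ≥ c·(k₁² + k₂²) − λ; (ii) −2 < κ_G/κ_b < 0. -/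
/-- If `A*t^2 ≤ B*t + C` for all real `t`, then `A ≤ 0`. -/
lemma aux_quad (A B C : ℝ) (h : ∀ t : ℝ, A * t ^ 2 ≤ B * t + C) : A ≤ 0 := by
  by_contra hA
  push_neg at hA
  obtain ⟨t, ht1, hAt⟩ : ∃ t : ℝ, 1 ≤ t ∧ A * t = |B| + |C| + A := by
    refine ⟨(|B| + |C|) / A + 1, ?_, by field_simp⟩
    have : 0 ≤ (|B| + |C|) / A := div_nonneg (by positivity) hA.le
    linarith
  have ht := h t
  have hAt2 : A * t ^ 2 = (|B| + |C| + A) * t := by rw [sq, ← mul_assoc, hAt]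
  nlinarith [le_abs_self B, le_abs_self C, ht1, hA, ht, hAt2,
    mul_nonneg (by linarith [le_abs_self B] : (0:ℝ) ≤ |B| - B) (by linarith : (0:ℝ) ≤ t),
    mul_nonneg (by linarith [abs_nonneg C] : (0:ℝ) ≤ |C| + A) (by linarith : (0:ℝ) ≤ t - 1)]

/-- Coercivity of the Helfrich density is equivalent to `−2 < κG/κb < 0`.
Let `κb > 0`, `κG ∈ ℝ`, `H₀ ∈ ℝ`. Then there exist `c > 0` and `λ > 0` with
`(κb/2)(k₁ + k₂ − H₀)² + κG·k₁k₂ ≥ c·(k₁² + k₂²) − λ` for all `k₁, k₂ ∈ ℝ`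
if and only if `−2 < κG/κb < 0`. -/
theorem stmt_4 (κb κG H₀ : ℝ) (hκb : 0 < κb) :
    (∃ c > (0:ℝ), ∃ lam > (0:ℝ), ∀ k₁ k₂ : ℝ,
        κb / 2 * (k₁ + k₂ - H₀) ^ 2 + κG * (k₁ * k₂) ≥ c * (k₁ ^ 2 + k₂ ^ 2) - lam)
      ↔ (-2 < κG / κb ∧ κG / κb < 0) := by
  constructor
  · rintro ⟨c, hc, lam, hlam, h⟩
    constructor
    · -- from k₁ = k₂ = t : κG ≥ 2c - 2κb > -2κb
      have hA : 2 * c - 2 * κb - κG ≤ 0 := by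
        apply aux_quad _ (-2 * κb * H₀) (lam + κb / 2 * H₀ ^ 2)
        intro t
        have := h t t
        nlinarith [this]
      rw [lt_div_iff₀ hκb]
      linarith
    · -- from k₂ = -k₁ : κG ≤ -2c < 0
      have hA : 2 * c + κG ≤ 0 := by
        apply aux_quad _ 0 (lam + κb / 2 * H₀ ^ 2)
        intro t
        have := h t (-t)
        nlinarith [this]
      exact div_neg_of_neg_of_pos (by linarith) hκb
  · rintro ⟨h1, h2⟩
    have hG1 : -2 * κb < κG := by rwa [lt_div_iff₀ hκb] at h1
    have hG2 : κG < 0 := by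
      have := (div_lt_iff₀ hκb).mp h2
      linarith
    set m : ℝ := min (2 * κb + κG) (-κG) with hm
    have hm0 : 0 < m := lt_min (by linarith) (by linarith)
    have hm1 : m ≤ 2 * κb + κG := min_le_left _ _
    have hm2 : m ≤ -κG := min_le_right _ _
    refine ⟨m / 4, by positivity, 4 * (κb * H₀) ^ 2 / m + 1, by positivity, ?_⟩
    intro k₁ k₂
    have hlm : (4 * (κb * H₀) ^ 2 / m + 1) * m = 4 * (κb * H₀) ^ 2 + m := by
      field_simp
    nlinarith [mul_nonneg (mul_nonneg hm0.le (by linarith : (0:ℝ) ≤ 2 * κb + κG - m)) (sq_nonneg (k₁ + k₂)),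
      mul_nonneg (mul_nonneg hm0.le (by linarith : (0:ℝ) ≤ -κG - m)) (sq_nonneg (k₁ - k₂)),
      sq_nonneg (m * k₁ - 4 * κb * H₀), sq_nonneg (m * k₂ - 4 * κb * H₀),
      mul_pos hm0 hm0, sq_nonneg H₀, mul_nonneg (mul_nonneg hm0.le hκb.le) (sq_nonneg H₀), hm0]
end

section
/- Let W(s) = (1−s²)²/4 and c₀ := ∫_{−1}^1 √(2W(s)) ds. Then c₀ is the minimum of the one-dimensional energies: (a) for every continuously differentiable function v : ℝ → ℝ with v(s) → 1 as s → +∞ and v(s) → −1 as s → −∞, one has ∫_ℝ ( |v′(s)|²/2 + W(v(s)) ) ds ≥ c₀; (b) the value c₀ is attained, namely there exists such an admissible v (one may take v(s) = tanh(s/√2)) with ∫_ℝ ( |v′|²/2 + W(v) ) ds = c₀. -/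
/-!
On `[-1, 1]`, `√(2W) = (1 - t²)/√2 = Φ'` with `Φ t = (t - t³/3)/√2`. Young's inequality gives
`v'²/2 + W(v) ≥ (1 - v²)/√2 · v' = (Φ ∘ v)'`, so the energy of `v` on `[-R, R]` is at least
`Φ (v R) - Φ (v (-R))`, which tends to `Φ 1 - Φ (-1) = c₀`. Equality holds pointwise when
`v' = (1 - v²)/√2`, and `tanh (s/√2)` solves this equation.
-/

open Filter MeasureTheory

/-- The double-well potential `W(s) = (1 − s²)²/4`. -/
noncomputable def W (s : ℝ) : ℝ := (1 - s ^ 2) ^ 2 / 4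

/-- The surface-tension constant `c₀ = ∫_{−1}^{1} √(2W(s)) ds`. -/
noncomputable def c₀ : ℝ := ∫ s in (-1:ℝ)..1, Real.sqrt (2 * W s)

open Real Topology Set

namespace Real

theorem tanh_eq_sinh_div_cosh_fun : tanh = sinh / cosh :=
  funext tanh_eq_sinh_div_cosh

theorem hasDerivAt_tanh (x : ℝ) : HasDerivAt tanh (1 - tanh x ^ 2) x := by
  have hc := (cosh_pos x).ne'
  have h := (hasDerivAt_sinh x).div (hasDerivAt_cosh x) hc
  rw [← tanh_eq_sinh_div_cosh_fun] at h
  refine h.congr_deriv ?_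
  rw [tanh_eq_sinh_div_cosh]
  field_simp

theorem contDiff_tanh {n : WithTop ℕ∞} : ContDiff ℝ n tanh := by
  rw [tanh_eq_sinh_div_cosh_fun]
  exact contDiff_sinh.div contDiff_cosh fun x => (cosh_pos x).ne'

theorem tanh_eq_one_sub (x : ℝ) : tanh x = 1 - 2 / (exp (2 * x) + 1) := by
  have h : exp (2 * x) = exp x * exp x := by rw [← exp_add]; ring_nf
  rw [tanh_eq_sinh_div_cosh, sinh_eq, cosh_eq, exp_neg, h]
  have := exp_pos x
  field_simp
  ring

theorem tendsto_tanh_atTop : Tendsto tanh atTop (𝓝 1) := by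
  have h : Tendsto (fun x => 2 / (exp (2 * x) + 1)) atTop (𝓝 0) :=
    (tendsto_atTop_add_const_right _ 1 (tendsto_exp_atTop.comp
      (tendsto_id.const_mul_atTop two_pos))).const_div_atTop 2
  simpa [funext tanh_eq_one_sub] using (tendsto_const_nhds (x := (1 : ℝ))).sub h

theorem tendsto_tanh_atBot : Tendsto tanh atBot (𝓝 (-1)) := by
  simpa [Function.comp_def] using (tendsto_tanh_atTop.comp tendsto_neg_atBot_atTop).neg

end Real

theorem tendsto_ofReal_intervalIntegral_lintegral {ι : Type*} {l : Filter ι}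
    [l.IsCountablyGenerated] {a b : ι → ℝ} (ha : Tendsto a l atBot) (hb : Tendsto b l atTop)
    {f : ℝ → ℝ} (hf : LocallyIntegrable f) (hf₀ : 0 ≤ f) :
    Tendsto (fun i => ENNReal.ofReal (∫ x in a i..b i, f x)) l
      (𝓝 (∫⁻ x, ENNReal.ofReal (f x))) := by
  refine ((aecover_Ioc ha hb).lintegral_tendsto_of_countably_generated
    hf.aestronglyMeasurable.aemeasurable.ennreal_ofReal).congr' ?_
  filter_upwards [ha.eventually_le_atBot 0, hb.eventually_ge_atTop 0] with i hai hbi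
  rw [intervalIntegral.integral_of_le (hai.trans hbi), ofReal_integral_eq_lintegral_ofReal
    ((hf.integrableOn_isCompact isCompact_Icc).mono_set Ioc_subset_Icc_self)
    (ae_of_all _ hf₀)]

noncomputable def Φ (t : ℝ) : ℝ := (t - t ^ 3 / 3) / √2

theorem hasDerivAt_Φ (t : ℝ) : HasDerivAt Φ ((1 - t ^ 2) / √2) t := by
  refine (((hasDerivAt_id' t).sub ((hasDerivAt_pow 3 t).div_const 3)).div_const √2).congr_deriv ?_
  norm_num

theorem W_eq_half_sq (t : ℝ) : W t = ((1 - t ^ 2) / √2) ^ 2 / 2 := by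
  rw [W, div_pow, sq_sqrt zero_le_two]; ring

theorem c₀_eq : c₀ = Φ 1 - Φ (-1) := by
  have h : EqOn (fun t => √(2 * W t)) (fun t => (1 - t ^ 2) / √2) (uIcc (-1) 1) := by
    intro t ht
    rw [uIcc_of_le (by norm_num)] at ht
    have : 0 ≤ (1 - t ^ 2) / √2 := div_nonneg (by nlinarith [ht.1, ht.2]) (sqrt_nonneg 2)
    simp only [W_eq_half_sq]
    rw [mul_div_cancel₀ _ two_ne_zero, sqrt_sq this]
  rw [c₀, intervalIntegral.integral_congr h]
  exact intervalIntegral.integral_eq_sub_of_hasDerivAt (fun t _ => hasDerivAt_Φ t)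
    ((by fun_prop : Continuous fun t : ℝ => (1 - t ^ 2) / √2).intervalIntegrable _ _)

theorem tendsto_Φ_sub {v : ℝ → ℝ} (hTop : Tendsto v atTop (𝓝 1))
    (hBot : Tendsto v atBot (𝓝 (-1))) :
    Tendsto (fun R => Φ (v R) - Φ (v (-R))) atTop (𝓝 c₀) := by
  have hΦ : Continuous Φ := by unfold Φ; fun_prop
  rw [c₀_eq]
  exact ((hΦ.tendsto 1).comp hTop).sub
    ((hΦ.tendsto (-1)).comp (hBot.comp tendsto_neg_atTop_atBot))

noncomputable def energyDensity (v : ℝ → ℝ) (s : ℝ) : ℝ := deriv v s ^ 2 / 2 + W (v s)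

noncomputable def energy (v : ℝ → ℝ) : ENNReal := ∫⁻ s, ENNReal.ofReal (energyDensity v s)

theorem energyDensity_nonneg (v : ℝ → ℝ) : 0 ≤ energyDensity v := fun s => by
  unfold energyDensity W; positivity

theorem mul_deriv_le_energyDensity (v : ℝ → ℝ) (s : ℝ) :
    (1 - v s ^ 2) / √2 * deriv v s ≤ energyDensity v s := by
  rw [energyDensity, W_eq_half_sq]
  linarith [two_mul_le_add_sq ((1 - v s ^ 2) / √2) (deriv v s)]

section energy

variable {v : ℝ → ℝ}

theorem continuous_energyDensity (hv : ContDiff ℝ 1 v) : Continuous (energyDensity v) := by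
  have := hv.continuous_deriv le_rfl
  have := hv.continuous
  unfold energyDensity W; fun_prop

theorem tendsto_intervalIntegral_energyDensity (hv : ContDiff ℝ 1 v) :
    Tendsto (fun R => ENNReal.ofReal (∫ s in -R..R, energyDensity v s)) atTop (𝓝 (energy v)) :=
  tendsto_ofReal_intervalIntegral_lintegral tendsto_neg_atTop_atBot tendsto_id
    (continuous_energyDensity hv).locallyIntegrable (energyDensity_nonneg v)

theorem intervalIntegral_mul_deriv (hv : ContDiff ℝ 1 v) (a b : ℝ) :
    ∫ s in a..b, (1 - v s ^ 2) / √2 * deriv v s = Φ (v b) - Φ (v a) := by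
  have hd := hv.continuous_deriv le_rfl
  have hc := hv.continuous
  exact intervalIntegral.integral_eq_sub_of_hasDerivAt
    (fun s _ => (hasDerivAt_Φ (v s)).comp s (hv.differentiable one_ne_zero s).hasDerivAt)
    ((by fun_prop : Continuous fun s => (1 - v s ^ 2) / √2 * deriv v s).intervalIntegrable _ _)

theorem energyDensity_eq_mul_deriv {s : ℝ} (h : deriv v s = (1 - v s ^ 2) / √2) :
    energyDensity v s = (1 - v s ^ 2) / √2 * deriv v s := by
  rw [energyDensity, W_eq_half_sq, h]; ring

theorem sub_Φ_le_intervalIntegral_energyDensity (hv : ContDiff ℝ 1 v) {a b : ℝ} (hab : a ≤ b) :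
    Φ (v b) - Φ (v a) ≤ ∫ s in a..b, energyDensity v s := by
  have hd := hv.continuous_deriv le_rfl
  have hc := hv.continuous
  rw [← intervalIntegral_mul_deriv hv]
  exact intervalIntegral.integral_mono_on hab
    ((by fun_prop : Continuous fun s => (1 - v s ^ 2) / √2 * deriv v s).intervalIntegrable _ _)
    ((continuous_energyDensity hv).intervalIntegrable _ _)
    (fun s _ => mul_deriv_le_energyDensity v s)

theorem ofReal_c₀_le_energy (hv : ContDiff ℝ 1 v) (hTop : Tendsto v atTop (𝓝 1))
    (hBot : Tendsto v atBot (𝓝 (-1))) : ENNReal.ofReal c₀ ≤ energy v := by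
  refine le_of_tendsto_of_tendsto ((ENNReal.continuous_ofReal.tendsto _).comp
    (tendsto_Φ_sub hTop hBot)) (tendsto_intervalIntegral_energyDensity hv) ?_
  filter_upwards [eventually_ge_atTop 0] with R hR
  exact ENNReal.ofReal_le_ofReal
    (sub_Φ_le_intervalIntegral_energyDensity hv (neg_le_self hR))

theorem energy_eq_of_deriv_eq (hv : ContDiff ℝ 1 v) (hode : ∀ s, deriv v s = (1 - v s ^ 2) / √2)
    (hTop : Tendsto v atTop (𝓝 1)) (hBot : Tendsto v atBot (𝓝 (-1))) :
    energy v = ENNReal.ofReal c₀ := by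
  refine tendsto_nhds_unique (tendsto_intervalIntegral_energyDensity hv) ?_
  simp only [fun s => energyDensity_eq_mul_deriv (hode s), intervalIntegral_mul_deriv hv]
  exact (ENNReal.continuous_ofReal.tendsto _).comp (tendsto_Φ_sub hTop hBot)

end energy

noncomputable def kink (s : ℝ) : ℝ := tanh (s / √2)

theorem hasDerivAt_kink (s : ℝ) : HasDerivAt kink ((1 - kink s ^ 2) / √2) s :=
  ((hasDerivAt_tanh _).comp s ((hasDerivAt_id' s).div_const √2)).congr_deriv (by
    rw [kink, mul_one_div])

theorem contDiff_kink : ContDiff ℝ 1 kink := contDiff_tanh.comp (contDiff_id.div_const _)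

theorem tendsto_kink_atTop : Tendsto kink atTop (𝓝 1) :=
  tendsto_tanh_atTop.comp (tendsto_id.atTop_div_const (sqrt_pos.2 two_pos))

theorem tendsto_kink_atBot : Tendsto kink atBot (𝓝 (-1)) :=
  tendsto_tanh_atBot.comp (tendsto_id.atBot_div_const (sqrt_pos.2 two_pos))

theorem energy_kink : energy kink = ENNReal.ofReal c₀ :=
  energy_eq_of_deriv_eq contDiff_kink (fun s => (hasDerivAt_kink s).deriv) tendsto_kink_atTop
    tendsto_kink_atBot

/-- `c₀` is the minimum of the one-dimensional Modica–Mortola energies over `C¹`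
profiles connecting `−1` to `+1`:
(a) every admissible profile has energy at least `c₀`;
(b) the value `c₀` is attained by some admissible profile. -/
theorem stmt_6 :
    (∀ v : ℝ → ℝ, ContDiff ℝ 1 v →
      Tendsto v atTop (nhds 1) → Tendsto v atBot (nhds (-1)) →
      ENNReal.ofReal c₀ ≤ ∫⁻ s : ℝ, ENNReal.ofReal ((deriv v s) ^ 2 / 2 + W (v s)))
    ∧
    (∃ v : ℝ → ℝ, ContDiff ℝ 1 v ∧
      Tendsto v atTop (nhds 1) ∧ Tendsto v atBot (nhds (-1)) ∧
      (∫⁻ s : ℝ, ENNReal.ofReal ((deriv v s) ^ 2 / 2 + W (v s))) = ENNReal.ofReal c₀) :=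
  ⟨fun _ hv hTop hBot => ofReal_c₀_le_energy hv hTop hBot,
    kink, contDiff_kink, tendsto_kink_atTop, tendsto_kink_atBot, energy_kink⟩
end

section
/- Let Ω ⊂ ℝ³ be a bounded open set and let u ∈ C³(ℝ³) be such that the set {∇u ≠ 0} is contained in a compact subset of Ω. Then ∫_{Ω ∩ {∇u ≠ 0}} [ (Δu)² − tr( (∇²u)² ) ] dx = 0; equivalently, ∫_{Ω ∩ {∇u ≠ 0}} div( Δu·∇u − (∇²u)·∇u ) dx = 0. -/
/-!
The field `F = Δu ∇u − ∇²u ∇u` (`hessFlux u`) is `C¹` and vanishes wherever `∇u = 0`, so it is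
supported in `K`; by the symmetry of second and third derivatives, `div F = (Δu)² − tr((∇²u)²)`.
The divergence theorem on a box around `K` gives `∫_{ℝ³} div F = 0`. No exhaustion of
`{∇u ≠ 0}` by level sets is needed: a differentiable map has zero derivative at every Lebesgue
density point of its zero set, so `∇²u = 0`, hence `div F = 0`, almost everywhere on `{∇u = 0}`,
and the integral over `{∇u ≠ 0}` is the integral over `ℝ³`.
-/

open MeasureTheory Set

noncomputable def pd (u : (Fin 3 → ℝ) → ℝ) (i : Fin 3) (x : Fin 3 → ℝ) : ℝ :=
  fderiv ℝ u x (Pi.single i 1)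

/-- Hessian entry `∂_i ∂_j u`. -/
noncomputable def hess (u : (Fin 3 → ℝ) → ℝ) (i j : Fin 3) (x : Fin 3 → ℝ) : ℝ :=
  pd (pd u j) i x

noncomputable def lap (u : (Fin 3 → ℝ) → ℝ) (x : Fin 3 → ℝ) : ℝ :=
  ∑ i, hess u i i x

noncomputable def divg (F : (Fin 3 → ℝ) → (Fin 3 → ℝ)) (x : Fin 3 → ℝ) : ℝ :=
  ∑ i, fderiv ℝ (fun y => F y i) x (Pi.single i 1)

theorem integral_divergence_eq_zero_of_hasCompactSupport {n : ℕ} {E : Type*} [NormedAddCommGroup E]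
    [NormedSpace ℝ E] [CompleteSpace E] {f : Fin (n + 1) → (Fin (n + 1) → ℝ) → E}
    (hf : ∀ i, ContDiff ℝ 1 (f i)) (hs : ∀ i, HasCompactSupport (f i)) :
    ∫ x, ∑ i, fderiv ℝ (f i) x (Pi.single i 1) = 0 := by
  obtain ⟨R, hR0, hR⟩ := (isCompact_iUnion hs).isBounded.subset_closedBall_lt 0 0
  have hsupp : ∀ i x, x ∈ tsupport (f i) → ‖x‖ ≤ R := fun i x hx =>
    mem_closedBall_zero_iff.1 (hR (mem_iUnion_of_mem i hx))
  have hface : ∀ i c (y : Fin n → ℝ), R < |c| → f i (Fin.insertNth i c y) = 0 := by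
    refine fun i c y hc => image_eq_zero_of_notMem_tsupport fun hy => hc.not_ge ?_
    simpa using (norm_le_pi_norm (Fin.insertNth i c y) i).trans (hsupp i _ hy)
  set a : Fin (n + 1) → ℝ := fun _ => -(R + 1)
  set b : Fin (n + 1) → ℝ := fun _ => R + 1
  have hIcc : ∀ x, ‖x‖ ≤ R → x ∈ Icc a b := fun x hx =>
    have hxi := fun i => (Real.norm_eq_abs (x i)).symm.trans_le ((norm_le_pi_norm x i).trans hx)
    ⟨fun i => by linarith [neg_abs_le (x i), hxi i],
      fun i => by linarith [le_abs_self (x i), hxi i]⟩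
  rw [← setIntegral_eq_integral_of_forall_compl_eq_zero fun x hx => Finset.sum_eq_zero
      fun i _ => by rw [fderiv_of_notMem_tsupport ℝ (hx <| hIcc x <| hsupp i x ·), zero_apply],
    integral_divergence_of_hasFDerivAt_off_countable' a b (fun _ => by linarith) f
      (fun i x => fderiv ℝ (f i) x) ∅ countable_empty (fun i => (hf i).continuous.continuousOn)
      (fun x _ i => ((hf i).differentiable one_ne_zero x).hasFDerivAt)
      (Continuous.integrableOn_Icc (by fun_prop))]
  refine Finset.sum_eq_zero fun i _ => ?_
  have hb : R < |b i| := by rw [abs_of_pos (by positivity)]; linarith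
  have ha : R < |a i| := by rw [abs_neg, abs_of_pos (by positivity)]; linarith
  simp [hface i _ _ ha, hface i _ _ hb]

theorem ae_fderiv_eq_zero_of_eq_zero {E : Type*} [NormedAddCommGroup E] [NormedSpace ℝ E]
    [FiniteDimensional ℝ E] [MeasurableSpace E] [BorelSpace E] (μ : Measure E)
    [μ.IsAddHaarMeasure] {g : E → E} (hg : Differentiable ℝ g) :
    ∀ᵐ x ∂μ, g x = 0 → fderiv ℝ g x = 0 := by
  have hs : MeasurableSet {x | g x = 0} :=
    (isClosed_eq hg.continuous continuous_const).measurableSet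
  have happ : ApproximatesLinearOn g (0 : E →L[ℝ] E) {x | g x = 0} 0 := fun x hx y hy => by
    simp [show g x = 0 from hx, show g y = 0 from hy]
  refine ae_imp_of_ae_restrict ?_
  filter_upwards [happ.norm_fderiv_sub_le μ hs (fderiv ℝ g)
    fun x _ => (hg x).hasFDerivAt.hasFDerivWithinAt] with x hx
  simpa using hx

section PartialDerivatives

variable {u f g : (Fin 3 → ℝ) → ℝ} {x : Fin 3 → ℝ}

theorem contDiff_pd {n : WithTop ℕ∞} (hu : ContDiff ℝ (n + 1) u) (i : Fin 3) :
    ContDiff ℝ n (pd u i) :=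
  (hu.fderiv_right le_rfl).clm_apply contDiff_const

theorem contDiff_hess {n : WithTop ℕ∞} (hu : ContDiff ℝ (n + 1 + 1) u) (i j : Fin 3) :
    ContDiff ℝ n (hess u i j) :=
  contDiff_pd (contDiff_pd hu j) i

theorem contDiff_lap {n : WithTop ℕ∞} (hu : ContDiff ℝ (n + 1 + 1) u) : ContDiff ℝ n (lap u) :=
  ContDiff.sum fun i _ => contDiff_hess hu i i

theorem hess_eq_fderiv_fderiv (hf : ContDiff ℝ 2 f) (i j : Fin 3) (x : Fin 3 → ℝ) :
    hess f i j x = fderiv ℝ (fderiv ℝ f) x (Pi.single i 1) (Pi.single j 1) := by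
  have hdf : Differentiable ℝ (fderiv ℝ f) :=
    (hf.fderiv_right (m := 1) le_rfl).differentiable one_ne_zero
  change fderiv ℝ (fun y => fderiv ℝ f y (Pi.single j 1)) x (Pi.single i 1) = _
  simp [fderiv_clm_apply (hdf x) (differentiableAt_const _)]

theorem hess_comm (hf : ContDiff ℝ 2 f) (i j : Fin 3) (x : Fin 3 → ℝ) :
    hess f i j x = hess f j i x := by
  rw [hess_eq_fderiv_fderiv hf, hess_eq_fderiv_fderiv hf,
    hf.contDiffAt.isSymmSndFDerivAt (by simp)]

theorem pd_mul (hf : DifferentiableAt ℝ f x) (hg : DifferentiableAt ℝ g x) (i : Fin 3) :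
    pd (fun y => f y * g y) i x = pd f i x * g x + f x * pd g i x := by
  simp only [pd, fderiv_fun_mul hf hg, add_apply, smul_apply, smul_eq_mul]
  ring

theorem pd_sub (hf : DifferentiableAt ℝ f x) (hg : DifferentiableAt ℝ g x) (i : Fin 3) :
    pd (fun y => f y - g y) i x = pd f i x - pd g i x := by
  simp only [pd, fderiv_fun_sub hf hg, sub_apply]

theorem pd_sum {ι : Type*} {s : Finset ι} {φ : ι → (Fin 3 → ℝ) → ℝ}
    (hφ : ∀ j ∈ s, DifferentiableAt ℝ (φ j) x) (i : Fin 3) :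
    pd (fun y => ∑ j ∈ s, φ j y) i x = ∑ j ∈ s, pd (φ j) i x := by
  simp only [pd, fderiv_fun_sum hφ, sum_apply]

theorem pd_lap (hu : ContDiff ℝ 3 u) (j : Fin 3) (x : Fin 3 → ℝ) :
    pd (lap u) j x = ∑ i, pd (hess u i i) j x :=
  pd_sum (fun i _ => (contDiff_hess hu i i).differentiable one_ne_zero x) j

theorem pd_hess_comm (hu : ContDiff ℝ 3 u) (i j : Fin 3) (x : Fin 3 → ℝ) :
    pd (hess u i j) i x = pd (hess u i i) j x := by
  rw [funext (hess_comm (hu.of_le (by norm_num)) i j)]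
  exact hess_comm (contDiff_pd hu i) i j x

theorem ae_hess_eq_zero_of_pd_eq_zero (hu : ContDiff ℝ 2 u) :
    ∀ᵐ x, (∀ i, pd u i x = 0) → ∀ i j, hess u i j x = 0 := by
  have hgrad : ∀ x, HasFDerivAt (fun x j => pd u j x)
      (ContinuousLinearMap.pi fun j => fderiv ℝ (pd u j) x) x := fun x =>
    hasFDerivAt_pi.2 fun j => ((contDiff_pd hu j).differentiable one_ne_zero x).hasFDerivAt
  filter_upwards [ae_fderiv_eq_zero_of_eq_zero volume fun x => (hgrad x).differentiableAt]
    with x hx hzero i j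
  have h := (hgrad x).fderiv.symm.trans (hx (funext hzero))
  simpa [hess, pd] using congr($h (Pi.single i 1) j)

end PartialDerivatives

noncomputable def hessFlux (u : (Fin 3 → ℝ) → ℝ) (y : Fin 3 → ℝ) (i : Fin 3) : ℝ :=
  lap u y * pd u i y - ∑ j, hess u i j y * pd u j y

section HessFlux

variable {u : (Fin 3 → ℝ) → ℝ}

theorem contDiff_hessFlux_apply (hu : ContDiff ℝ 3 u) (i : Fin 3) :
    ContDiff ℝ 1 (fun y => hessFlux u y i) :=
  have hpd : ∀ j, ContDiff ℝ 1 (pd u j) := fun j => (contDiff_pd (n := 2) hu j).of_le (by norm_num)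
  ((contDiff_lap hu).mul (hpd i)).sub (ContDiff.sum fun j _ => (contDiff_hess hu i j).mul (hpd j))

theorem pd_hessFlux_apply (hu : ContDiff ℝ 3 u) (i : Fin 3) (x : Fin 3 → ℝ) :
    pd (fun y => hessFlux u y i) i x = pd (lap u) i x * pd u i x + lap u x * hess u i i x -
      ∑ j, (pd (hess u i j) i x * pd u j x + hess u i j x * hess u i j x) := by
  have hpd : ∀ j, DifferentiableAt ℝ (pd u j) x := fun j =>
    (contDiff_pd (n := 2) hu j).differentiable (by norm_num) x
  have hhess : ∀ j, DifferentiableAt ℝ (hess u i j) x := fun j =>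
    (contDiff_hess hu i j).differentiable one_ne_zero x
  have hlap : DifferentiableAt ℝ (lap u) x := (contDiff_lap hu).differentiable one_ne_zero x
  unfold hessFlux
  rw [pd_sub (f := fun y => lap u y * pd u i y) (g := fun y => ∑ j, hess u i j y * pd u j y)
      (hlap.mul (hpd i)) (DifferentiableAt.fun_sum fun j _ => (hhess j).mul (hpd j)),
    pd_mul hlap (hpd i), pd_sum (φ := fun j y => hess u i j y * pd u j y)
      fun j _ => (hhess j).mul (hpd j)]
  simp only [pd_mul (hhess _) (hpd _)]
  rfl

theorem divg_hessFlux (hu : ContDiff ℝ 3 u) (x : Fin 3 → ℝ) :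
    divg (hessFlux u) x = lap u x ^ 2 - ∑ i, ∑ j, hess u i j x * hess u j i x := by
  have hcancel : ∑ i, ∑ j, pd (hess u i j) i x * pd u j x = ∑ j, pd (lap u) j x * pd u j x := by
    rw [Finset.sum_comm]
    refine Finset.sum_congr rfl fun j _ => ?_
    rw [pd_lap hu, Finset.sum_mul]
    exact Finset.sum_congr rfl fun i _ => by rw [pd_hess_comm hu]
  have hsymm : ∑ i, ∑ j, hess u i j x * hess u i j x = ∑ i, ∑ j, hess u i j x * hess u j i x :=
    Finset.sum_congr rfl fun i _ => Finset.sum_congr rfl fun j _ => by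
      rw [hess_comm (hu.of_le (by norm_num)) j i]
  change ∑ i, pd (fun y => hessFlux u y i) i x = _
  simp only [pd_hessFlux_apply hu, Finset.sum_sub_distrib, Finset.sum_add_distrib, ← Finset.mul_sum,
    hcancel, hsymm]
  rw [show ∑ i, hess u i i x = lap u x from rfl]
  ring

end HessFlux

theorem stmt_9_general (Ω : Set (Fin 3 → ℝ))
    (u : (Fin 3 → ℝ) → ℝ) (hu : ContDiff ℝ 3 u)
    (K : Set (Fin 3 → ℝ)) (hK : IsCompact K) (hKΩ : K ⊆ Ω)
    (hgrad : {x | ∃ i, pd u i x ≠ 0} ⊆ K) :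
    (∫ x in Ω ∩ {x | ∃ i, pd u i x ≠ 0},
        ((lap u x) ^ 2 - ∑ i, ∑ j, hess u i j x * hess u j i x)) = 0
    ∧ (∫ x in Ω ∩ {x | ∃ i, pd u i x ≠ 0},
        divg (fun y i => lap u y * pd u i y - ∑ j, hess u i j y * pd u j y) x) = 0 := by
  set U := {x | ∃ i, pd u i x ≠ 0}
  have hgrad_zero : ∀ x ∉ U, ∀ i, pd u i x = 0 := by simp [U]
  have hdiv : ∫ x in U, divg (hessFlux u) x = 0 := by
    rw [setIntegral_eq_integral_of_ae_compl_eq_zero]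
    · refine integral_divergence_eq_zero_of_hasCompactSupport (contDiff_hessFlux_apply hu) fun i =>
        HasCompactSupport.intro hK fun x hx => ?_
      simp [hessFlux, hgrad_zero x (hx <| hgrad ·)]
    · filter_upwards [ae_hess_eq_zero_of_pd_eq_zero (hu.of_le (by norm_num))] with x hx hxU
      simp [divg_hessFlux hu, lap, hx (hgrad_zero x hxU)]
  rw [inter_eq_right.2 (hgrad.trans hKΩ)]
  exact ⟨by simpa only [divg_hessFlux hu] using hdiv, hdiv⟩

/-- If `Ω ⊂ ℝ³` is bounded and open, `u ∈ C³(ℝ³)` and `{∇u ≠ 0}` is contained in a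
compact subset of `Ω`, then `∫_{Ω ∩ {∇u ≠ 0}} [(Δu)² − tr((∇²u)²)] dx = 0`;
equivalently `∫_{Ω ∩ {∇u ≠ 0}} div(Δu·∇u − (∇²u)·∇u) dx = 0`. -/
theorem stmt_9 (Ω : Set (Fin 3 → ℝ)) (hΩo : IsOpen Ω) (hΩb : Bornology.IsBounded Ω)
    (u : (Fin 3 → ℝ) → ℝ) (hu : ContDiff ℝ 3 u)
    (K : Set (Fin 3 → ℝ)) (hK : IsCompact K) (hKΩ : K ⊆ Ω)
    (hgrad : {x | ∃ i, pd u i x ≠ 0} ⊆ K) :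
    (∫ x in Ω ∩ {x | ∃ i, pd u i x ≠ 0},
        ((lap u x) ^ 2 - ∑ i, ∑ j, hess u i j x * hess u j i x)) = 0
    ∧ (∫ x in Ω ∩ {x | ∃ i, pd u i x ≠ 0},
        divg (fun y i => lap u y * pd u i y - ∑ j, hess u i j y * pd u j y) x) = 0 :=
  stmt_9_general Ω u hu K hK hKΩ hgrad
end
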